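/- arXiv:1007.3369 — 6 statements merged into one kernel-verified Lean document; each statement's English description precedes it below -/
import Mathlib

section
/- Fix r≥1 and define the triangular array u_{i,j} by u_{i,j}=0 for i>j, u_{0,j}=0 for all j, and for 1≤i≤j: u_{i,j} = u_{i,j-1} + u_{i-1,j} + [r = j−i+1]·g^0_{i-1,j}, where g^0_{i,j} = binom(i+j,i) − binom(i+j,i−1) and [·] is the indicator. Then for 0≤i≤j: if j−i ≥ r, u_{i,j} = binom(i+j, i−1) − binom(i+j, i−r−1); and if 0 ≤ j−i < r, u_{i,j} = binom(i+j, j−r) − binom(i+j, i−r−1). -/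
/-- Binomial coefficient `n` choose `k` with the convention that it vanishes for `k < 0`,
taking values in `ℤ`. -/
def ichoose (n : ℕ) (k : ℤ) : ℤ := if k < 0 then 0 else n.choose k.toNat

/-- The generalized Catalan array `g⁰ i j = binom (i+j) i − binom (i+j) (i−1)`. -/
def genCatalan (i j : ℕ) : ℤ := ichoose (i + j) i - ichoose (i + j) ((i : ℤ) - 1)

lemma ipascal (n : ℕ) (k : ℤ) : ichoose (n+1) k = ichoose n (k-1) + ichoose n k := by
  unfold ichoose
  by_cases h : k < 0
  · simp [h, show k - 1 < 0 by omega]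
  · by_cases h2 : k - 1 < 0
    · have : k = 0 := by omega
      subst this; norm_num
    · have h4 : k.toNat = (k-1).toNat + 1 := by omega
      simp only [if_neg h, if_neg h2, h4, Nat.choose_succ_succ]
      push_cast; ring

theorem stmt_2 (r : ℕ) (hr : 1 ≤ r) (u : ℕ → ℕ → ℤ)
    (h_zero : ∀ i j, j < i → u i j = 0)
    (h_top : ∀ j, u 0 j = 0)
    (h_rec : ∀ i j : ℕ, 1 ≤ i → i ≤ j →
      u i j = u i (j - 1) + u (i - 1) j +
        (if (r : ℤ) = (j : ℤ) - (i : ℤ) + 1 then genCatalan (i - 1) j else 0)) :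
    ∀ i j : ℕ, i ≤ j →
      ((r : ℤ) ≤ (j : ℤ) - (i : ℤ) →
        u i j = ichoose (i + j) ((i : ℤ) - 1) - ichoose (i + j) ((i : ℤ) - r - 1)) ∧
      ((j : ℤ) - (i : ℤ) < (r : ℤ) →
        u i j = ichoose (i + j) ((j : ℤ) - r) - ichoose (i + j) ((i : ℤ) - r - 1)) := by
  suffices H : ∀ n : ℕ, ∀ i j : ℕ, i + j = n → i ≤ j →
      ((r : ℤ) ≤ (j : ℤ) - (i : ℤ) →
        u i j = ichoose (i + j) ((i : ℤ) - 1) - ichoose (i + j) ((i : ℤ) - r - 1)) ∧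
      ((j : ℤ) - (i : ℤ) < (r : ℤ) →
        u i j = ichoose (i + j) ((j : ℤ) - r) - ichoose (i + j) ((i : ℤ) - r - 1)) by
    intro i j hij; exact H (i+j) i j rfl hij
  intro n
  induction n using Nat.strong_induction_on with
  | _ n IH =>
  intro i j hn hij
  rcases Nat.eq_zero_or_pos i with hi | hi
  · subst hi
    rw [h_top]
    constructor
    · intro h; unfold ichoose; rw [if_pos (by omega), if_pos (by omega)]; ring
    · intro h; unfold ichoose; rw [if_pos (by omega), if_pos (by omega)]; ring
  · have hj : 1 ≤ j := le_trans hi hij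
    set m := i + j - 1 with hm
    have hm1 : i + (j-1) = m := by omega
    have hm2 : (i-1) + j = m := by omega
    have hmn : i + j = m + 1 := by omega
    have h2 := IH m (by omega) (i-1) j (by omega) (by omega)
    have hcast1 : ((i-1 : ℕ) : ℤ) = (i:ℤ) - 1 := by omega
    rw [hm2, hcast1] at h2
    by_cases hA : (r:ℤ) ≤ (j:ℤ) - i
    · refine ⟨fun _ => ?_, fun h => absurd h (by omega)⟩
      have huA : u i (j-1) = ichoose m ((i:ℤ)-1) - ichoose m ((i:ℤ)-r-1) := by
        have h1 := IH m (by omega) i (j-1) (by omega) (by omega)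
        rw [hm1, show ((j-1:ℕ):ℤ) = (j:ℤ)-1 by omega] at h1
        rcases le_or_gt (r:ℤ) ((j:ℤ)-1-i) with h | h
        · exact h1.1 (by omega)
        · rw [h1.2 (by omega), show (j:ℤ)-1-r = (i:ℤ)-1 by omega]
      have huB : u (i-1) j = ichoose m ((i:ℤ)-2) - ichoose m ((i:ℤ)-r-2) := by
        rw [h2.1 (by omega), show (i:ℤ)-1-1 = (i:ℤ)-2 by ring,
          show (i:ℤ)-1-r-1 = (i:ℤ)-r-2 by ring]
      rw [h_rec i j hi hij, if_neg (by omega), huA, huB, hmn, ipascal, ipascal,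
        show (i:ℤ)-1-1 = (i:ℤ)-2 by ring, show (i:ℤ)-r-1-1 = (i:ℤ)-r-2 by ring]
      ring
    · refine ⟨fun h => absurd h (by omega), fun _ => ?_⟩
      by_cases hind : (r:ℤ) = (j:ℤ) - i + 1
      · have huA : u i (j-1) = ichoose m ((i:ℤ)-2) - ichoose m ((i:ℤ)-r-1) := by
          rcases eq_or_lt_of_le hij with heq | hlt
          · rw [h_zero i (j-1) (by omega), show (i:ℤ)-2 = (i:ℤ)-r-1 by omega]; ring
          · have h1 := IH m (by omega) i (j-1) (by omega) (by omega)
            rw [hm1, show ((j-1:ℕ):ℤ) = (j:ℤ)-1 by omega] at h1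
            rw [h1.2 (by omega), show (j:ℤ)-1-r = (i:ℤ)-2 by omega]
        have huB : u (i-1) j = ichoose m ((i:ℤ)-2) - ichoose m ((i:ℤ)-r-2) := by
          rw [h2.1 (by omega), show (i:ℤ)-1-1 = (i:ℤ)-2 by ring,
            show (i:ℤ)-1-r-1 = (i:ℤ)-r-2 by ring]
        have hg : genCatalan (i-1) j = ichoose m ((i:ℤ)-1) - ichoose m ((i:ℤ)-2) := by
          unfold genCatalan
          rw [hm2, hcast1, show (i:ℤ)-1-1 = (i:ℤ)-2 by ring]
        rw [h_rec i j hi hij, if_pos hind, huA, huB, hg, hmn,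
          show (j:ℤ)-r = (i:ℤ)-1 by omega, ipascal, ipascal,
          show (i:ℤ)-1-1 = (i:ℤ)-2 by ring, show (i:ℤ)-r-1-1 = (i:ℤ)-r-2 by ring]
        ring
      · have huA : u i (j-1) = ichoose m ((j:ℤ)-1-r) - ichoose m ((i:ℤ)-r-1) := by
          rcases eq_or_lt_of_le hij with heq | hlt
          · rw [h_zero i (j-1) (by omega), show (j:ℤ)-1-r = (i:ℤ)-r-1 by omega]; ring
          · have h1 := IH m (by omega) i (j-1) (by omega) (by omega)
            rw [hm1, show ((j-1:ℕ):ℤ) = (j:ℤ)-1 by omega] at h1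
            exact h1.2 (by omega)
        have huB : u (i-1) j = ichoose m ((j:ℤ)-r) - ichoose m ((i:ℤ)-r-2) := by
          rw [h2.2 (by omega), show (i:ℤ)-1-r-1 = (i:ℤ)-r-2 by ring]
        rw [h_rec i j hi hij, if_neg hind, huA, huB, hmn, ipascal, ipascal,
          show (j:ℤ)-r-1 = (j:ℤ)-1-r by ring, show (i:ℤ)-r-1-1 = (i:ℤ)-r-2 by ring]
        ring
end

section
/- With u_{i,j} as defined for a fixed r with 1≤r≤i, the diagonal entries satisfy u_{i,i} = binom(2i, i−r) − binom(2i, i−r−1). -/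
lemma ichoose_pascal (n : ℕ) (k : ℤ) :
    ichoose (n + 1) k = ichoose n k + ichoose n (k - 1) := by
  rcases lt_trichotomy k 0 with h | h | h
  · simp [ichoose, h, show k - 1 < 0 by omega]
  · subst h; simp [ichoose]
  · have h1 : ¬ k < 0 := by omega
    have h2 : ¬ k - 1 < 0 := by omega
    have h3 : k.toNat = (k - 1).toNat + 1 := by omega
    simp only [ichoose, if_neg h1, if_neg h2, h3, Nat.choose_succ_succ]
    push_cast
    ring

lemma ichoose_neg (n : ℕ) (k : ℤ) (h : k < 0) : ichoose n k = 0 := by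
  simp [ichoose, h]

/-- For fixed `r ≥ 1`, let `u` be the triangular array with `u i j = 0` for
`i > j`, `u 0 j = 0`, and
`u i j = u i (j-1) + u (i-1) j + [r = j-i+1] ⬝ (binom (i+j-1) (i-1) - binom (i+j-1) (i-2))`
for `1 ≤ i ≤ j`. Then for `1 ≤ r ≤ i` the diagonal entries satisfy
`u i i = binom (2i) (i-r) - binom (2i) (i-r-1)`. -/
theorem stmt_3 (r : ℕ) (hr : 1 ≤ r) (u : ℕ → ℕ → ℤ)
    (h_zero : ∀ i j, j < i → u i j = 0)
    (h_top : ∀ j, u 0 j = 0)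
    (h_rec : ∀ i j : ℕ, 1 ≤ i → i ≤ j →
      u i j = u i (j - 1) + u (i - 1) j +
        (if (r : ℤ) = (j : ℤ) - (i : ℤ) + 1 then
          ichoose (i + j - 1) ((i : ℤ) - 1) - ichoose (i + j - 1) ((i : ℤ) - 2) else 0)) :
    ∀ i : ℕ, r ≤ i →
      u i i = ichoose (2 * i) ((i : ℤ) - r) - ichoose (2 * i) ((i : ℤ) - r - 1) := by
  set g : ℕ → ℕ → ℤ := fun i j =>
    ichoose (i + j) (min ((i : ℤ) - 1) ((j : ℤ) - r)) - ichoose (i + j) ((i : ℤ) - r - 1)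
    with hg
  have key : ∀ n : ℕ, ∀ i j : ℕ, i + j = n → i ≤ j → u i j = g i j := by
    intro n
    induction n using Nat.strong_induction_on with
    | _ n ih =>
      intro i j hn hij
      rcases Nat.eq_zero_or_pos i with h0 | h1
      · subst h0
        rw [h_top, hg]
        simp only
        rw [ichoose_neg _ _ (by omega), ichoose_neg _ _ (by push_cast; omega)]
        ring
      · rw [h_rec i j h1 hij]
        have hm : i + j = (i + j - 1) + 1 := by omega
        rcases eq_or_lt_of_le hij with heq | hlt
        · -- i = j
          subst heq
          rw [h_zero i (i - 1) (by omega)]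
          rw [ih ((i - 1) + i) (by omega) (i - 1) i rfl (by omega)]
          rw [hg]
          simp only
          have hc : ((i - 1 : ℕ) : ℤ) = (i : ℤ) - 1 := by push_cast [h1]; ring
          rw [hc]
          set k := i + i - 1 with hk
          have hm2 : (i - 1) + i = k := by omega
          have hm3 : i + i = k + 1 := by omega
          rw [hm2, hm3, ichoose_pascal, ichoose_pascal]
          split_ifs with hd
          · -- r = 1
            have hr1 : (r : ℤ) = 1 := by omega
            rw [hr1]
            have e1 : min ((i : ℤ) - 1) ((i : ℤ) - 1) = (i : ℤ) - 1 := by omega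
            have e2 : min ((i : ℤ) - 1 - 1) ((i : ℤ) - 1) = (i : ℤ) - 2 := by omega
            rw [e1, e2]
            ring_nf
          · -- r ≥ 2
            have hr2 : 2 ≤ r := by omega
            have e1 : min ((i : ℤ) - 1) ((i : ℤ) - r) = (i : ℤ) - r := by omega
            have e2 : min ((i : ℤ) - 1 - 1) ((i : ℤ) - r) = min ((i:ℤ) - 2) ((i:ℤ) - r) := by
              congr 1; ring
            rw [e1, e2]
            rcases eq_or_lt_of_le hr2 with hr2' | hr3
            · -- r = 2 : min (i-2) (i-2) = i - 2 = i - r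
              have e3 : min ((i : ℤ) - 2) ((i : ℤ) - r) = (i : ℤ) - r := by omega
              rw [e3]
              ring_nf
            · -- r ≥ 3 : min (i-2) (i-r) = i - r
              have e3 : min ((i : ℤ) - 2) ((i : ℤ) - r) = (i : ℤ) - r := by omega
              rw [e3]
              ring_nf
        · -- i < j
          rw [ih (i + (j - 1)) (by omega) i (j - 1) rfl (by omega)]
          rw [ih ((i - 1) + j) (by omega) (i - 1) j rfl (by omega)]
          rw [hg]
          simp only
          have hci : ((i - 1 : ℕ) : ℤ) = (i : ℤ) - 1 := by push_cast [h1]; ring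
          have hcj : ((j - 1 : ℕ) : ℤ) = (j : ℤ) - 1 := by push_cast [show 1 ≤ j by omega]; ring
          rw [hci, hcj]
          have hm2 : i + (j - 1) = i + j - 1 := by omega
          have hm3 : (i - 1) + j = i + j - 1 := by omega
          set m := i + j - 1 with hmdef
          have hm' : i + j = m + 1 := by omega
          rw [hm2, hm3, hm', ichoose_pascal, ichoose_pascal]
          rcases lt_trichotomy ((j : ℤ) - (i : ℤ) + 1) (r : ℤ) with hpos | hpos | hpos
          · -- strictly below source line: j - i + 1 < r
            rw [if_neg (by omega)]
            have e1 : min ((i : ℤ) - 1) ((j : ℤ) - r) = (j : ℤ) - r := by omega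
            have e2 : min ((i : ℤ) - 1) ((j : ℤ) - 1 - r) = (j : ℤ) - 1 - r := by omega
            have e3 : min ((i : ℤ) - 1 - 1) ((j : ℤ) - r) = (j : ℤ) - r := by omega
            rw [e1, e2, e3]
            ring_nf
          · -- on source line: r = j - i + 1, i < j so r ≥ 2
            rw [if_pos (by omega)]
            have e1 : min ((i : ℤ) - 1) ((j : ℤ) - r) = (i : ℤ) - 1 := by omega
            have e2 : min ((i : ℤ) - 1) ((j : ℤ) - 1 - r) = (i : ℤ) - 2 := by omega
            have e3 : min ((i : ℤ) - 1 - 1) ((j : ℤ) - r) = (i : ℤ) - 2 := by omega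
            rw [e1, e2, e3]
            ring_nf
          · -- strictly above source line
            rw [if_neg (by omega)]
            have e1 : min ((i : ℤ) - 1) ((j : ℤ) - r) = (i : ℤ) - 1 := by omega
            have e2 : min ((i : ℤ) - 1) ((j : ℤ) - 1 - r) = (i : ℤ) - 1 := by omega
            have e3 : min ((i : ℤ) - 1 - 1) ((j : ℤ) - r) = (i : ℤ) - 2 := by omega
            rw [e1, e2, e3]
            ring_nf
  intro i hri
  rw [key (i + i) i i rfl le_rfl, hg]
  simp only
  have e1 : min ((i : ℤ) - 1) ((i : ℤ) - r) = (i : ℤ) - r := by omega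
  rw [e1, show i + i = 2 * i by ring]
end

section
/- Define m_k recursively from positive reals z_1,...,z_n by the Skibinsky triangular array: g_{i,j}=0 for i>j, g_{0,j}=1, g_{i,j}=g_{i,j-1}+z_{j-i+1}·g_{i-1,j} for 1≤i≤j, and m_k = g_{k,k}. Then m_k, viewed as a polynomial function of (z_1,...,z_k), satisfies ∂m_k/∂z_k = z_1·z_2⋯z_{k-1} (with the convention that the empty product equals 1). -/
/-!
`g i j` involves no variable beyond `z j`, so differentiating the recursion
`g i k = g i (k-1) + z (k-i+1) * g (i-1) k` in `z k` kills the first term. For `i ≥ 2` the factor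
`z (k-i+1)` is a constant, while for `i = 1` it is `z k` itself and `g 0 k = 1`. Hence
`∂ g i k / ∂ z k = z (k-i+1) ⋯ z (k-1)`, which is `z 1 ⋯ z (k-1)` for `i = k`.
-/

open Finset Function

structure IsSkibinskyArray (g : ℕ → ℕ → (ℕ → ℝ) → ℝ) : Prop where
  eq_zero_of_lt : ∀ i j z, j < i → g i j z = 0
  zero_eq_one : ∀ j z, g 0 j z = 1
  eq_add_mul : ∀ i j z, 1 ≤ i → i ≤ j →
    g i j z = g i (j - 1) z + z (j - i + 1) * g (i - 1) j z

namespace IsSkibinskyArray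

variable {g : ℕ → ℕ → (ℕ → ℝ) → ℝ}

theorem eq_of_eqOn_Iic (hg : IsSkibinskyArray g) {j : ℕ} {z z' : ℕ → ℝ}
    (h : Set.EqOn z z' (Set.Iic j)) (i : ℕ) : g i j z = g i j z' := by
  induction j using Nat.strong_induction_on generalizing i with
  | _ j ihj =>
    induction i with
    | zero => rw [hg.zero_eq_one, hg.zero_eq_one]
    | succ i ihi =>
      rcases lt_or_ge j (i + 1) with hji | hij
      · rw [hg.eq_zero_of_lt _ _ _ hji, hg.eq_zero_of_lt _ _ _ hji]
      · have hprev : g (i + 1) (j - 1) z = g (i + 1) (j - 1) z' :=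
          ihj (j - 1) (by omega) (h.mono (Set.Iic_subset_Iic.mpr (by omega))) _
        rw [hg.eq_add_mul _ _ z (by omega) hij, hg.eq_add_mul _ _ z' (by omega) hij,
          Nat.add_sub_cancel, hprev, ihi, h (Set.mem_Iic.mpr (by omega))]

theorem apply_update_of_lt (hg : IsSkibinskyArray g) {i j k : ℕ} (hjk : j < k) (z : ℕ → ℝ)
    (t : ℝ) : g i j (update z k t) = g i j z :=
  hg.eq_of_eqOn_Iic (fun _ hm => update_of_ne (by simp at hm; omega) _ _) i

theorem apply_update_self (hg : IsSkibinskyArray g) {i k : ℕ} (hi : 1 ≤ i) (hik : i ≤ k)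
    (z : ℕ → ℝ) (t : ℝ) :
    g i k (update z k t) =
      g i (k - 1) z + update z k t (k - i + 1) * g (i - 1) k (update z k t) := by
  rw [hg.eq_add_mul _ _ _ hi hik, hg.apply_update_of_lt (by omega)]

theorem hasDerivAt_apply_update_self (hg : IsSkibinskyArray g) {i k : ℕ} (hi : 1 ≤ i)
    (hik : i ≤ k) (z : ℕ → ℝ) :
    HasDerivAt (fun t => g i k (update z k t)) (∏ m ∈ Icc (k - i + 1) (k - 1), z m) (z k) := by
  induction i, hi using Nat.le_induction with
  | base =>
    have hfun : (fun t => g 1 k (update z k t)) = fun t => g 1 (k - 1) z + t := by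
      funext t
      rw [hg.apply_update_self le_rfl hik, Nat.sub_add_cancel hik, update_self, hg.zero_eq_one,
        mul_one]
    rw [hfun, Icc_eq_empty (by omega), prod_empty]
    exact (hasDerivAt_id _).const_add _
  | succ i hi ih =>
    have hfun : (fun t => g (i + 1) k (update z k t))
        = fun t => g (i + 1) (k - 1) z + z (k - i) * g i k (update z k t) := by
      funext t
      rw [hg.apply_update_self (by omega) hik, update_of_ne (by omega), Nat.add_sub_cancel,
        show k - (i + 1) + 1 = k - i by omega]
    rw [hfun, show k - (i + 1) + 1 = k - i by omega, ← mul_prod_Ioc_eq_prod_Icc (by omega),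
      ← Icc_add_one_left_eq_Ioc]
    exact ((ih (by omega)).const_mul _).const_add _

end IsSkibinskyArray

/-- Let `g` be the Skibinsky triangular array associated with recursion variables
`z₁, z₂, …`: `g i j z = 0` for `i > j`, `g 0 j z = 1`, and
`g i j z = g i (j-1) z + z (j-i+1) * g (i-1) j z` for `1 ≤ i ≤ j`, and let `m k = g k k` be the
`k`-th moment, a polynomial function of `(z₁, …, z_k)`. Then for positive recursion variables,
`∂ m_k / ∂ z_k = z₁ ⋯ z_{k-1}` (empty product equal to 1). -/
theorem stmt_4 (g : ℕ → ℕ → (ℕ → ℝ) → ℝ)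
    (h_zero : ∀ i j z, j < i → g i j z = 0)
    (h_top : ∀ j z, g 0 j z = 1)
    (h_rec : ∀ i j : ℕ, ∀ z : ℕ → ℝ, 1 ≤ i → i ≤ j →
      g i j z = g i (j - 1) z + z (j - i + 1) * g (i - 1) j z) :
    ∀ k : ℕ, 1 ≤ k → ∀ z : ℕ → ℝ, (∀ i, 0 < z i) →
      HasDerivAt (fun t => g k k (Function.update z k t))
        (∏ i ∈ Finset.Icc 1 (k - 1), z i) (z k) := by
  intro k hk z _
  have hg : IsSkibinskyArray g := ⟨h_zero, h_top, h_rec⟩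
  simpa using hg.hasDerivAt_apply_update_self hk le_rfl z
end

section
/- Let Z_1,...,Z_n be independent random variables with Z_k ~ Gamma(γ_k + n − k + 1, δ_k) (shape γ_k+n−k+1, rate δ_k), where γ_k>−1 and δ_k>0. Define M_1,...,M_n recursively via the Skibinsky array with recursion variables Z_1,...,Z_n (so M_k = g_{k,k}). Then the joint density of (M_1,...,M_n) at a point m⃗ in the interior of the moment space M_n([0,∞)) equals ∏_{k=1}^n (δ_k^{γ_k+n−k+1}/Γ(γ_k+n−k+1)) · z_k(m⃗)^{γ_k} · exp(−δ_k z_k(m⃗)), where z_k(m⃗) = (m_k − m_k^−)/(m_{k-1} − m_{k-1}^−) and m_k^− is the minimal k-th moment given m_1,...,m_{k-1}. Equivalently: the Jacobian determinant of the map m⃗_n ↦ (z_1,...,z_n) equals ∏_{k=1}^n z_k^{-(n-k)}. -/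
/-!
The map `Φ = ψₙ⁻¹ : z ↦ (g₁₁, …, gₙₙ)` is smooth, and its Jacobian matrix is lower triangular
because `g_{k,k}` only reads `z₁, …, z_k`. Moreover `g_{i,m}` is affine in `z_m` with slope
`z_{m-i+1} ⋯ z_{m-1}`, so the `k`-th diagonal entry is `z₁ ⋯ z_{k-1}` and
`det DΦ(z) = ∏ₖ z_k^{n-k}`. The factor `z_k^{n-k}` is exactly what separates the
`Gamma(γ_k + n - k + 1, δ_k)` density from `z_k^{γ_k} e^{-δ_k z_k}`, so the change of variables
formula for the injective map `Φ` on the positive orthant yields the stated density, and the inverse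
function theorem gives `det Dψ = (det DΦ)⁻¹`.
-/

open MeasureTheory ProbabilityTheory Set Filter
open scoped ENNReal Topology

theorem fderiv_apply_single_apply {𝕜 ι ι' : Type*} [NontriviallyNormedField 𝕜] [Fintype ι]
    [DecidableEq ι] [Fintype ι'] {F : (ι → 𝕜) → ι' → 𝕜} {v : ι → 𝕜} (hF : DifferentiableAt 𝕜 F v)
    {k : ι} {j : ι'} {a : 𝕜} (h : ∀ c, F (Function.update v k c) j = F v j + (c - v k) * a) :
    fderiv 𝕜 F v (Pi.single k 1) j = a := by
  have hchain : HasDerivAt (fun c => F (Function.update v k c)) (fderiv 𝕜 F v (Pi.single k 1))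
      (v k) :=
    hF.hasFDerivAt.comp_hasDerivAt_of_eq (v k) (hasDerivAt_update v k (v k))
      (Function.update_eq_self k v).symm
  have haffine : HasDerivAt (fun c => F v j + (c - v k) * a) a (v k) := by
    simpa using (((hasDerivAt_id (v k)).sub_const (v k)).mul_const a).const_add (F v j)
  exact (hasDerivAt_pi.1 hchain j).unique (by simpa only [h] using haffine)

theorem HasStrictFDerivAt.det_fderiv_of_local_left_inverse {𝕜 E : Type*}
    [NontriviallyNormedField 𝕜] [CompleteSpace 𝕜] [NormedAddCommGroup E] [NormedSpace 𝕜 E]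
    [FiniteDimensional 𝕜 E] {f g : E → E} {f' : E →L[𝕜] E} {x : E}
    (hf : HasStrictFDerivAt f f' x) (hdet : f'.det ≠ 0) (hg : ∀ᶠ y in 𝓝 x, g (f y) = y) :
    (fderiv 𝕜 g (f x)).det = f'.det⁻¹ := by
  have : CompleteSpace E := FiniteDimensional.complete 𝕜 E
  let L := f'.toContinuousLinearEquivOfDetNeZero hdet
  have hL : (L : E →L[𝕜] E) = f' := f'.coe_toContinuousLinearEquivOfDetNeZero hdet
  rw [← hL] at hf ⊢
  rw [(hf.to_local_left_inverse hg).hasFDerivAt.fderiv, ContinuousLinearEquiv.det_coe_symm]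

theorem Fin.prod_prod_Iio {M : Type*} [CommMonoid M] {n : ℕ} (f : Fin n → M) :
    ∏ k, ∏ r ∈ Finset.Iio k, f r = ∏ r, f r ^ (n - 1 - r) := by
  rw [Finset.prod_comm' (t' := Finset.univ) (s' := Finset.Ioi) (by simp)]
  simp [Finset.prod_const, Fin.card_Ioi]

theorem MeasureTheory.lintegral_fin_nat_prod_eq_prod {n : ℕ} {E : Fin n → Type*}
    {mE : ∀ i, MeasurableSpace (E i)} {μ : (i : Fin n) → Measure (E i)} [∀ i, SigmaFinite (μ i)]
    {f : (i : Fin n) → E i → ℝ≥0∞} (hf : ∀ i, Measurable (f i)) :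
    ∫⁻ x : (i : Fin n) → E i, ∏ i, f i (x i) ∂(Measure.pi μ) = ∏ i, ∫⁻ x, f i x ∂(μ i) := by
  induction n with
  | zero => simp
  | succ n ih =>
    let e := MeasurableEquiv.piFinSuccAbove E 0
    let F : E 0 × ((j : Fin n) → E j.succ) → ℝ≥0∞ := fun p => f 0 p.1 * ∏ j, f j.succ (p.2 j)
    calc ∫⁻ x, ∏ i, f i (x i) ∂(Measure.pi μ)
        = ∫⁻ x, F (e x) ∂(Measure.pi μ) := lintegral_congr fun x => Fin.prod_univ_succ _
      _ = ∫⁻ p, F p ∂((μ 0).prod (Measure.pi fun j : Fin n => μ j.succ)) :=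
        (measurePreserving_piFinSuccAbove μ 0).lintegral_comp_emb e.measurableEmbedding F
      _ = (∫⁻ x, f 0 x ∂(μ 0)) * ∏ j : Fin n, ∫⁻ x, f j.succ x ∂(μ j.succ) := by
        rw [← ih fun j => hf j.succ]
        exact lintegral_prod_mul (hf 0).aemeasurable
          (Finset.measurable_prod _ fun (j : Fin n) _ =>
            (hf j.succ).comp (measurable_pi_apply j)).aemeasurable
      _ = ∏ i, ∫⁻ x, f i x ∂(μ i) := (Fin.prod_univ_succ fun i => ∫⁻ x, f i x ∂(μ i)).symm

theorem MeasureTheory.lintegral_fintype_prod_eq_prod {ι : Type*} [Fintype ι] {E : ι → Type*}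
    {mE : ∀ i, MeasurableSpace (E i)} {μ : (i : ι) → Measure (E i)} [∀ i, SigmaFinite (μ i)]
    {f : (i : ι) → E i → ℝ≥0∞} (hf : ∀ i, Measurable (f i)) :
    ∫⁻ x : (i : ι) → E i, ∏ i, f i (x i) ∂(Measure.pi μ) = ∏ i, ∫⁻ x, f i x ∂(μ i) := by
  let e := (Fintype.equivFin ι).symm
  rw [← (measurePreserving_piCongrLeft _ e).lintegral_comp_emb
    (MeasurableEquiv.measurableEmbedding _)]
  simp_rw [← e.prod_comp, MeasurableEquiv.coe_piCongrLeft, Equiv.piCongrLeft_apply_apply]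
  exact lintegral_fin_nat_prod_eq_prod fun i => hf (e i)

theorem MeasureTheory.Measure.pi_withDensity {ι : Type*} [Fintype ι] {E : ι → Type*}
    {mE : ∀ i, MeasurableSpace (E i)} {μ : (i : ι) → Measure (E i)} [∀ i, SigmaFinite (μ i)]
    {f : (i : ι) → E i → ℝ≥0∞} (hf : ∀ i, Measurable (f i))
    [∀ i, SigmaFinite ((μ i).withDensity (f i))] :
    Measure.pi (fun i => (μ i).withDensity (f i)) =
      (Measure.pi μ).withDensity fun x => ∏ i, f i (x i) := by
  refine Measure.pi_eq fun s hs => ?_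
  rw [withDensity_apply _ (MeasurableSet.univ_pi hs), Measure.restrict_pi_pi μ,
    lintegral_fintype_prod_eq_prod hf]
  simp_rw [withDensity_apply _ (hs _)]

section ChangeOfVariables

variable {E : Type*} [NormedAddCommGroup E] [NormedSpace ℝ E] [FiniteDimensional ℝ E]
  [MeasurableSpace E] [BorelSpace E] (μ : Measure E) [μ.IsAddHaarMeasure]
  {f : E → E} {f' : E → E →L[ℝ] E} {s : Set E}

theorem MeasureTheory.map_withDensity_abs_det_fderiv_mul (hs : MeasurableSet s)
    (hf' : ∀ x ∈ s, HasFDerivWithinAt f (f' x) s x) (hf : InjOn f s) (hfm : Measurable f)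
    (h : E → ℝ≥0∞) :
    Measure.map f ((μ.restrict s).withDensity fun x => ENNReal.ofReal |(f' x).det| * h (f x)) =
      μ.withDensity ((f '' s).indicator h) := by
  ext t ht
  rw [Measure.map_apply hfm ht, withDensity_apply _ (hfm ht), withDensity_apply _ ht,
    Measure.restrict_restrict (hfm ht), inter_comm,
    setLIntegral_indicator (measurable_image_of_fderivWithin hs hf' hf), ← image_inter_preimage,
    lintegral_image_eq_lintegral_abs_det_fderiv_mul μ (hs.inter (hfm ht))
      (fun x hx => (hf' x hx.1).mono inter_subset_left) (hf.mono inter_subset_left)]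

end ChangeOfVariables

theorem ProbabilityTheory.gammaMeasure_eq_withDensity_restrict (a r : ℝ) :
    gammaMeasure a r = (volume.restrict (Ioi 0)).withDensity (gammaPDF a r) := by
  rw [gammaMeasure, ← withDensity_indicator measurableSet_Ioi]
  refine withDensity_congr_ae ?_
  filter_upwards [Measure.ae_ne volume 0] with x hx
  rcases hx.lt_or_gt with hneg | hpos
  · simp [gammaPDF_of_neg hneg, hneg.not_gt]
  · exact (indicator_of_mem hpos _).symm

theorem ProbabilityTheory.pi_gammaMeasure {ι : Type*} [Fintype ι] (a r : ι → ℝ) :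
    Measure.pi (fun i => gammaMeasure (a i) (r i)) =
      (volume.restrict (univ.pi fun _ => Ioi 0)).withDensity
        fun x => ∏ i, gammaPDF (a i) (r i) (x i) := by
  simp_rw [gammaMeasure_eq_withDensity_restrict]
  have (i : ι) : SigmaFinite ((volume.restrict (Ioi 0)).withDensity (gammaPDF (a i) (r i))) :=
    SigmaFinite.withDensity_ofReal _
  rw [Measure.pi_withDensity (f := fun i => gammaPDF (a i) (r i))
      fun i => (measurable_gammaPDFReal (a i) (r i)).ennreal_ofReal,
    ← Measure.restrict_pi_pi, volume_pi]

theorem ProbabilityTheory.gammaPDFReal_eq_pow_mul {a r x : ℝ} (hx : 0 < x) (m : ℕ) :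
    gammaPDFReal a r x =
      x ^ m * (r ^ a / Real.Gamma a * (x ^ (a - 1 - m) * Real.exp (-r * x))) := by
  have hsplit : x ^ (a - 1) = x ^ m * x ^ (a - 1 - m) := by
    rw [← Real.rpow_natCast, ← Real.rpow_add hx, add_sub_cancel]
  rw [gammaPDFReal, if_pos hx.le, hsplit, neg_mul]
  ring

theorem ProbabilityTheory.prod_gammaPDF_eq_mul {ι : Type*} [Fintype ι] {a r x : ι → ℝ}
    (ha : ∀ i, 0 < a i) (hr : ∀ i, 0 < r i) (hx : ∀ i, 0 < x i) (m : ι → ℕ) :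
    ∏ i, gammaPDF (a i) (r i) (x i) = ENNReal.ofReal (∏ i, x i ^ m i) * ENNReal.ofReal
      (∏ i, r i ^ a i / Real.Gamma (a i) * (x i ^ (a i - 1 - m i) * Real.exp (-r i * x i))) := by
  rw [← ENNReal.ofReal_mul (Finset.prod_nonneg fun i _ => pow_nonneg (hx i).le _),
    ← Finset.prod_mul_distrib]
  simp_rw [gammaPDF, ← gammaPDFReal_eq_pow_mul (hx _) (m _)]
  exact (ENNReal.ofReal_prod_of_nonneg fun i _ => gammaPDFReal_nonneg (ha i) (hr i) (x i)).symm

theorem ProbabilityTheory.prod_gammaPDF_eq_prod_pow_mul {n : ℕ} {γ δ x : Fin n → ℝ}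
    (hγ : ∀ k, -1 < γ k) (hδ : ∀ k, 0 < δ k) (hx : ∀ k, 0 < x k) :
    ∏ k, gammaPDF (γ k + n - k) (δ k) (x k) = ENNReal.ofReal (∏ k, x k ^ (n - 1 - k)) *
      ENNReal.ofReal (∏ k, δ k ^ (γ k + n - k) / Real.Gamma (γ k + n - k) *
        (x k ^ γ k * Real.exp (-δ k * x k))) := by
  have hshape (k : Fin n) : 0 < γ k + n - k := by
    have : (k : ℝ) + 1 ≤ n := by exact_mod_cast k.isLt
    linarith [hγ k]
  have hexp (k : Fin n) : γ k + n - k - 1 - ((n - 1 - k : ℕ) : ℝ) = γ k := by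
    have := k.isLt
    rw [Nat.cast_sub (by omega), Nat.cast_sub (by omega)]
    push_cast
    ring
  rw [prod_gammaPDF_eq_mul hshape hδ hx fun k => n - 1 - k]
  simp_rw [hexp]

structure IsSkibinskyArray_s5 (g : ℕ → ℕ → (ℕ → ℝ) → ℝ) : Prop where
  eq_zero_of_lt : ∀ i j z, j < i → g i j z = 0
  zero_left : ∀ j z, g 0 j z = 1
  recursion : ∀ i j : ℕ, ∀ z : ℕ → ℝ, 1 ≤ i → i ≤ j →
    g i j z = g i (j - 1) z + z (j - i + 1) * g (i - 1) j z

namespace IsSkibinskyArray_s5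

variable {g : ℕ → ℕ → (ℕ → ℝ) → ℝ} (hg : IsSkibinskyArray_s5 g)
include hg

theorem recursion_succ {i j : ℕ} (z : ℕ → ℝ) (hij : i ≤ j) :
    g (i + 1) (j + 1) z = g (i + 1) j z + z (j - i + 1) * g i (j + 1) z := by
  simpa using hg.recursion (i + 1) (j + 1) z (by omega) (by omega)

theorem apply_eq_of_eqOn {z z' : ℕ → ℝ} {j : ℕ} (h : EqOn z z' (Icc 1 j)) (i : ℕ) :
    g i j z = g i j z' := by
  induction i generalizing j with
  | zero => rw [hg.zero_left, hg.zero_left]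
  | succ i ih =>
    induction j with
    | zero => rw [hg.eq_zero_of_lt _ _ _ (by omega), hg.eq_zero_of_lt _ _ _ (by omega)]
    | succ j ihj =>
      rcases lt_or_ge j i with hji | hij
      · rw [hg.eq_zero_of_lt _ _ _ (by omega), hg.eq_zero_of_lt _ _ _ (by omega)]
      rw [hg.recursion_succ z hij, hg.recursion_succ z' hij, ih h,
        ihj (h.mono (Icc_subset_Icc_right j.le_succ)), h ⟨by omega, by omega⟩]

theorem apply_eq_add_mul_prod {z z' : ℕ → ℝ} {m : ℕ} (h : EqOn z z' (Icc 1 m)) {i : ℕ}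
    (hi : 1 ≤ i) (him : i ≤ m + 1) :
    g i (m + 1) z' =
      g i (m + 1) z + (z' (m + 1) - z (m + 1)) * ∏ t ∈ Finset.Ico (m + 2 - i) (m + 1), z t := by
  induction i, hi using Nat.le_induction with
  | base =>
    rw [hg.recursion_succ z (Nat.zero_le m), hg.recursion_succ z' (Nat.zero_le m), hg.zero_left,
      hg.zero_left, hg.apply_eq_of_eqOn h]
    simp
  | succ i hi ih =>
    rw [hg.recursion_succ z (by omega), hg.recursion_succ z' (by omega), ih (by omega),
      hg.apply_eq_of_eqOn h, ← h ⟨by omega, by omega⟩,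
      Finset.prod_eq_prod_Ico_succ_bot (by omega : m + 2 - (i + 1) < m + 1),
      show m + 2 - (i + 1) = m - i + 1 by omega, show m - i + 1 + 1 = m + 2 - i by omega]
    ring

theorem contDiff_comp {E : Type*} [NormedAddCommGroup E] [NormedSpace ℝ E] {N : WithTop ℕ∞}
    {z : E → ℕ → ℝ} (hz : ∀ t, ContDiff ℝ N fun x => z x t) (i j : ℕ) :
    ContDiff ℝ N fun x => g i j (z x) := by
  induction i generalizing j with
  | zero => simpa only [hg.zero_left] using contDiff_const
  | succ i ih =>
    induction j with
    | zero => simpa only [hg.eq_zero_of_lt _ 0 _ (Nat.succ_pos i)] using contDiff_const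
    | succ j ihj =>
      rcases lt_or_ge j i with hji | hij
      · simpa only [hg.eq_zero_of_lt _ _ _ (Nat.succ_lt_succ hji)] using contDiff_const
      simp_rw [hg.recursion_succ _ hij]
      exact ihj.add ((hz _).mul (ih _))

end IsSkibinskyArray_s5

/-- The recursion variables `z₁, …, zₙ` are indexed from `1`: `recursionVars n v t = v (t - 1)` for
`1 ≤ t ≤ n`. The value at `t = 0` is junk (`v 0` if `n > 0`); the Skibinsky array never reads it. -/
noncomputable def recursionVars (n : ℕ) (v : Fin n → ℝ) : ℕ → ℝ :=
  fun t => if ht : t - 1 < n then v ⟨t - 1, ht⟩ else 1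

theorem recursionVars_succ {n : ℕ} (v : Fin n → ℝ) (k : Fin n) :
    recursionVars n v (k + 1) = v k := by
  simp [recursionVars]

theorem contDiff_recursionVars_apply {n : ℕ} {N : WithTop ℕ∞} (t : ℕ) :
    ContDiff ℝ N fun v : Fin n → ℝ => recursionVars n v t := by
  unfold recursionVars
  split_ifs
  exacts [contDiff_apply ℝ ℝ _, contDiff_const]

theorem prod_Ico_recursionVars {n : ℕ} (v : Fin n → ℝ) (k : Fin n) :
    ∏ t ∈ Finset.Ico 1 ((k : ℕ) + 1), recursionVars n v t = ∏ r ∈ Finset.Iio k, v r := by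
  simp_rw [← recursionVars_succ v]
  rw [← Finset.prod_Ico_add' _ 0 (k : ℕ) 1, ← Finset.range_eq_Ico, ← Nat.Iio_eq_range,
    ← Fin.map_valEmbedding_Iio, Finset.prod_map]
  rfl

theorem eqOn_recursionVars_update {n : ℕ} (v : Fin n → ℝ) (k : Fin n) (c : ℝ) :
    EqOn (recursionVars n v) (recursionVars n (Function.update v k c)) (Icc 1 k) := by
  rintro t ⟨ht1, htk⟩
  have : t - 1 ≠ k := by omega
  simp only [recursionVars]
  split_ifs
  · rw [Function.update_of_ne (Fin.ne_of_val_ne this)]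
  · rfl

noncomputable def skibinskyMap (g : ℕ → ℕ → (ℕ → ℝ) → ℝ) (n : ℕ) (v : Fin n → ℝ) : Fin n → ℝ :=
  fun j => g (j + 1) (j + 1) (recursionVars n v)

namespace IsSkibinskyArray_s5

variable {g : ℕ → ℕ → (ℕ → ℝ) → ℝ} (hg : IsSkibinskyArray_s5 g) {n : ℕ}
include hg

theorem contDiff_skibinskyMap {N : WithTop ℕ∞} : ContDiff ℝ N (skibinskyMap g n) :=
  contDiff_pi.2 fun _ => hg.contDiff_comp (fun t => contDiff_recursionVars_apply t) _ _

theorem skibinskyMap_update_of_lt (v : Fin n → ℝ) {j k : Fin n} (hjk : j < k) (c : ℝ) :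
    skibinskyMap g n (Function.update v k c) j = skibinskyMap g n v j :=
  (hg.apply_eq_of_eqOn ((eqOn_recursionVars_update v k c).mono
    (Icc_subset_Icc_right (Nat.succ_le_of_lt hjk))) _).symm

theorem skibinskyMap_update_self (v : Fin n → ℝ) (k : Fin n) (c : ℝ) :
    skibinskyMap g n (Function.update v k c) k =
      skibinskyMap g n v k + (c - v k) * ∏ r ∈ Finset.Iio k, v r := by
  have := hg.apply_eq_add_mul_prod (eqOn_recursionVars_update v k c) (Nat.le_add_left 1 k) le_rfl
  rw [recursionVars_succ, recursionVars_succ, Function.update_self] at this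
  rw [skibinskyMap, skibinskyMap, this, show (k : ℕ) + 2 - (k + 1) = 1 by omega,
    prod_Ico_recursionVars]

theorem det_fderiv_skibinskyMap (v : Fin n → ℝ) :
    (fderiv ℝ (skibinskyMap g n) v).det = ∏ k, v k ^ (n - 1 - k) := by
  have hd : DifferentiableAt ℝ (skibinskyMap g n) v :=
    (hg.contDiff_skibinskyMap (N := 1)).differentiable one_ne_zero v
  set M := LinearMap.toMatrix' (fderiv ℝ (skibinskyMap g n) v : (Fin n → ℝ) →ₗ[ℝ] Fin n → ℝ)
  have hM : ∀ j k, M j k = fderiv ℝ (skibinskyMap g n) v (Pi.single k 1) j := by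
    simp [M, LinearMap.toMatrix'_apply]
  have hlower : M.IsLowerTriangular := fun j k hjk => by
    rw [hM]
    refine fderiv_apply_single_apply hd fun c => ?_
    rw [hg.skibinskyMap_update_of_lt v (OrderDual.toDual_lt_toDual.1 hjk), mul_zero, add_zero]
  have hdiag : ∀ k, M k k = ∏ r ∈ Finset.Iio k, v r := fun k => by
    rw [hM]
    exact fderiv_apply_single_apply hd (hg.skibinskyMap_update_self v k)
  rw [ContinuousLinearMap.det, ← LinearMap.det_toMatrix', Matrix.det_of_isLowerTriangular _ hlower]
  simp_rw [hdiag]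
  exact Fin.prod_prod_Iio v

end IsSkibinskyArray_s5

theorem stmt_5_general (n : ℕ) (γ δ : Fin n → ℝ)
    (hγ : ∀ k, -1 < γ k) (hδ : ∀ k, 0 < δ k)
    (g : ℕ → ℕ → (ℕ → ℝ) → ℝ)
    (h_zero : ∀ i j z, j < i → g i j z = 0)
    (h_top : ∀ j z, g 0 j z = 1)
    (h_rec : ∀ i j : ℕ, ∀ z : ℕ → ℝ, 1 ≤ i → i ≤ j →
      g i j z = g i (j - 1) z + z (j - i + 1) * g (i - 1) j z)
    -- `Φ = ψₙ⁻¹ : (z₁,…,zₙ) ↦ (m₁,…,mₙ)` via the Skibinsky array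
    (Φ : (Fin n → ℝ) → (Fin n → ℝ))
    (hΦ : ∀ v : Fin n → ℝ, ∀ j : Fin n,
      Φ v j = g (j + 1) (j + 1) (fun i => if hi : i - 1 < n then v ⟨i - 1, hi⟩ else 1))
    -- `ψ : m ↦ (z₁,…,zₙ)`, the inverse of `Φ` on the positive orthant
    (ψ : (Fin n → ℝ) → (Fin n → ℝ))
    (hψ : ∀ v : Fin n → ℝ, (∀ k, 0 < v k) → ψ (Φ v) = v) :
    Measure.map Φ (Measure.pi (fun k : Fin n => gammaMeasure (γ k + n - k) (δ k))) =
      volume.withDensity (Set.indicator (Φ '' {v : Fin n → ℝ | ∀ k, 0 < v k}) (fun m =>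
        ENNReal.ofReal (∏ k : Fin n,
          δ k ^ (γ k + n - k) / Real.Gamma (γ k + n - k) *
            (ψ m k ^ (γ k) * Real.exp (-δ k * ψ m k))))) ∧
    ∀ v : Fin n → ℝ, (∀ k, 0 < v k) →
      (fderiv ℝ ψ (Φ v)).det = ∏ k : Fin n, v k ^ (-((n : ℤ) - (k + 1))) := by
  have hg : IsSkibinskyArray_s5 g := ⟨h_zero, h_top, h_rec⟩
  obtain rfl : Φ = skibinskyMap g n := funext fun v => funext (hΦ v)
  set s : Set (Fin n → ℝ) := {v | ∀ k, 0 < v k}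
  have hs : s = univ.pi fun _ => Ioi 0 := by ext; simp [s]
  have hs_open : IsOpen s := hs ▸ isOpen_set_pi finite_univ fun _ _ => isOpen_Ioi
  have hΦ1 : ContDiff ℝ 1 (skibinskyMap g n) := hg.contDiff_skibinskyMap
  have hdet_pos (v) (hv : v ∈ s) : 0 < (fderiv ℝ (skibinskyMap g n) v).det := by
    rw [hg.det_fderiv_skibinskyMap]
    exact Finset.prod_pos fun k _ => pow_pos (hv k) _
  refine ⟨?_, fun v hv => ?_⟩
  · have hinj : InjOn (skibinskyMap g n) s := fun a ha b hb hab => by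
      rw [← hψ a ha, hab, hψ b hb]
    refine Eq.trans ?_ (map_withDensity_abs_det_fderiv_mul volume hs_open.measurableSet
      (fun x _ => (hΦ1.differentiable one_ne_zero x).hasFDerivAt.hasFDerivWithinAt) hinj
      hΦ1.continuous.measurable _)
    rw [pi_gammaMeasure, ← hs]
    refine congrArg _ (withDensity_congr_ae ((ae_restrict_iff' hs_open.measurableSet).2
      (ae_of_all _ fun x hx => ?_)))
    beta_reduce
    rw [hψ x hx, abs_of_pos (hdet_pos x hx), hg.det_fderiv_skibinskyMap,
      prod_gammaPDF_eq_prod_pow_mul hγ hδ hx]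
  · rw [(hΦ1.contDiffAt.hasStrictFDerivAt one_ne_zero).det_fderiv_of_local_left_inverse
      (hdet_pos v hv).ne' (eventually_of_mem (hs_open.mem_nhds hv) hψ),
      hg.det_fderiv_skibinskyMap, ← Finset.prod_inv_distrib]
    refine Finset.prod_congr rfl fun k _ => ?_
    rw [← zpow_natCast, ← zpow_neg]
    congr
    omega

/-- Let `Z₁, …, Zₙ` be independent with `Z_k ~ Gamma(γ_k + n - k + 1, δ_k)`
(`γ_k > -1`, `δ_k > 0`) and define `M₁, …, Mₙ` via the Skibinsky array with recursion
variables `Z₁, …, Zₙ` (`M_k = g k k`), i.e. `(M₁,…,Mₙ) = Φ(Z₁,…,Zₙ)` where `Φ = ψₙ⁻¹`.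
Then the joint law of `(M₁,…,Mₙ)` has, on the interior of the moment space `Mₙ([0,∞))`
(the image of the positive orthant under `Φ`), the Lebesgue density
`∏_{k=1}^n (δ_k^{γ_k+n-k+1} / Γ(γ_k+n-k+1)) z_k(m)^{γ_k} exp(-δ_k z_k(m))`,
where `z(m) = ψ(m)` is the inverse map. Equivalently, the Jacobian determinant of the map
`m ↦ (z₁,…,zₙ)` equals `∏_{k=1}^n z_k^{-(n-k)}`. -/
theorem stmt_5 (n : ℕ) (hn : 1 ≤ n) (γ δ : Fin n → ℝ)
    (hγ : ∀ k, -1 < γ k) (hδ : ∀ k, 0 < δ k)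
    (g : ℕ → ℕ → (ℕ → ℝ) → ℝ)
    (h_zero : ∀ i j z, j < i → g i j z = 0)
    (h_top : ∀ j z, g 0 j z = 1)
    (h_rec : ∀ i j : ℕ, ∀ z : ℕ → ℝ, 1 ≤ i → i ≤ j →
      g i j z = g i (j - 1) z + z (j - i + 1) * g (i - 1) j z)
    -- `Φ = ψₙ⁻¹ : (z₁,…,zₙ) ↦ (m₁,…,mₙ)` via the Skibinsky array
    (Φ : (Fin n → ℝ) → (Fin n → ℝ))
    (hΦ : ∀ v : Fin n → ℝ, ∀ j : Fin n,
      Φ v j = g (j + 1) (j + 1) (fun i => if hi : i - 1 < n then v ⟨i - 1, hi⟩ else 1))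
    -- `ψ : m ↦ (z₁,…,zₙ)`, the inverse of `Φ` on the positive orthant
    (ψ : (Fin n → ℝ) → (Fin n → ℝ))
    (hψ : ∀ v : Fin n → ℝ, (∀ k, 0 < v k) → ψ (Φ v) = v) :
    Measure.map Φ (Measure.pi (fun k : Fin n => gammaMeasure (γ k + n - k) (δ k))) =
      volume.withDensity (Set.indicator (Φ '' {v : Fin n → ℝ | ∀ k, 0 < v k}) (fun m =>
        ENNReal.ofReal (∏ k : Fin n,
          δ k ^ (γ k + n - k) / Real.Gamma (γ k + n - k) *
            (ψ m k ^ (γ k) * Real.exp (-δ k * ψ m k))))) ∧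
    ∀ v : Fin n → ℝ, (∀ k, 0 < v k) →
      (fderiv ℝ ψ (Φ v)).det = ∏ k : Fin n, v k ^ (-((n : ℤ) - (k + 1))) :=
  stmt_5_general n γ δ hγ hδ g h_zero h_top h_rec Φ hΦ ψ hψ
end

section
/- Let p_k^{(n)}, n≥k, be random variables where p_k^{(n)} has density proportional to f_k(x)·(x−x²)^{n−k} on (0,1), with f_k:(0,1)→[0,∞) integrable, ∫_0^1 f_k>0, and satisfying ∫_{1/2−ε}^{1/2+ε} f_k(x)dx > 0 for every ε>0. Then p_k^{(n)} → 1/2 in probability as n→∞ (indeed, P(|p_k^{(n)}−1/2| ≥ ε) decays geometrically in n). -/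
/-!
On `(0, 1)` the weight `x (1 - x) = 1/4 - (x - 1/2)²` is at most `a = 1/4 - δ²` where
`|x - 1/2| ≥ δ`, and at least `b = 1/4 - (δ/2)²` on the interval of radius `δ/2` about `1/2`.
Hence the numerator is at most `aᵐ ∫ f` and the denominator at least `bᵐ ∫_{|x-1/2|<δ/2} f > 0`,
so the ratio is `O((a/b)ᵐ)` with `m = n - k`.
-/

open MeasureTheory Set Filter

section WeightedMass

variable {α : Type*} [MeasurableSpace α] {μ : Measure α} {f w : α → ℝ} {s t : Set α} {m : ℕ}

theorem setIntegral_mul_pow_le_pow_mul (hs : MeasurableSet s) (ht : MeasurableSet t) (hts : t ⊆ s)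
    (hf_nonneg : ∀ x ∈ s, 0 ≤ f x) (hf : IntegrableOn f s μ)
    (hfw : IntegrableOn (fun x => f x * w x ^ m) s μ)
    {a : ℝ} (ha : 0 ≤ a) (hw_nonneg : ∀ x ∈ t, 0 ≤ w x) (hw_le : ∀ x ∈ t, w x ≤ a) :
    ∫ x in t, f x * w x ^ m ∂μ ≤ a ^ m * ∫ x in s, f x ∂μ := by
  have hft : ∫ x in t, f x ∂μ ≤ ∫ x in s, f x ∂μ := by
    refine setIntegral_mono_set hf ?_ hts.eventuallyLE
    filter_upwards [ae_restrict_mem hs] with x hx using hf_nonneg x hx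
  calc ∫ x in t, f x * w x ^ m ∂μ ≤ ∫ x in t, a ^ m * f x ∂μ := by
        refine setIntegral_mono_on (hfw.mono_set hts) ((hf.mono_set hts).const_mul _) ht ?_
        intro x hx
        rw [mul_comm]
        exact mul_le_mul_of_nonneg_right (pow_le_pow_left₀ (hw_nonneg x hx) (hw_le x hx) m)
          (hf_nonneg x (hts hx))
    _ = a ^ m * ∫ x in t, f x ∂μ := integral_const_mul _ _
    _ ≤ a ^ m * ∫ x in s, f x ∂μ := mul_le_mul_of_nonneg_left hft (pow_nonneg ha m)

theorem pow_mul_le_setIntegral_mul_pow (hs : MeasurableSet s) (ht : MeasurableSet t) (hts : t ⊆ s)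
    (hf_nonneg : ∀ x ∈ s, 0 ≤ f x) (hf : IntegrableOn f s μ)
    (hfw : IntegrableOn (fun x => f x * w x ^ m) s μ) (hw_nonneg : ∀ x ∈ s, 0 ≤ w x)
    {b : ℝ} (hb : 0 ≤ b) (hw_ge : ∀ x ∈ t, b ≤ w x) :
    b ^ m * ∫ x in t, f x ∂μ ≤ ∫ x in s, f x * w x ^ m ∂μ := by
  calc b ^ m * ∫ x in t, f x ∂μ = ∫ x in t, b ^ m * f x ∂μ := (integral_const_mul _ _).symm
    _ ≤ ∫ x in t, f x * w x ^ m ∂μ := by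
        refine setIntegral_mono_on ((hf.mono_set hts).const_mul _) (hfw.mono_set hts) ht ?_
        intro x hx
        rw [mul_comm]
        exact mul_le_mul_of_nonneg_left (pow_le_pow_left₀ hb (hw_ge x hx) m)
          (hf_nonneg x (hts hx))
    _ ≤ ∫ x in s, f x * w x ^ m ∂μ := by
        refine setIntegral_mono_set hfw ?_ hts.eventuallyLE
        filter_upwards [ae_restrict_mem hs] with x hx
        exact mul_nonneg (hf_nonneg x hx) (pow_nonneg (hw_nonneg x hx) m)

theorem setIntegral_mul_pow_div_le {u : Set α} (hs : MeasurableSet s) (ht : MeasurableSet t)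
    (hu : MeasurableSet u) (hts : t ⊆ s) (hus : u ⊆ s) (hf_nonneg : ∀ x ∈ s, 0 ≤ f x)
    (hf : IntegrableOn f s μ) (hfw : IntegrableOn (fun x => f x * w x ^ m) s μ)
    (hw_nonneg : ∀ x ∈ s, 0 ≤ w x) {a b : ℝ} (ha : 0 ≤ a) (hb : 0 < b)
    (hw_le : ∀ x ∈ t, w x ≤ a) (hw_ge : ∀ x ∈ u, b ≤ w x) (hfu : 0 < ∫ x in u, f x ∂μ) :
    (∫ x in t, f x * w x ^ m ∂μ) / (∫ x in s, f x * w x ^ m ∂μ) ≤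
      (∫ x in s, f x ∂μ) / (∫ x in u, f x ∂μ) * (a / b) ^ m := by
  have hfs : 0 ≤ ∫ x in s, f x ∂μ := setIntegral_nonneg hs hf_nonneg
  calc (∫ x in t, f x * w x ^ m ∂μ) / (∫ x in s, f x * w x ^ m ∂μ)
      ≤ (a ^ m * ∫ x in s, f x ∂μ) / (b ^ m * ∫ x in u, f x ∂μ) :=
        div_le_div₀ (by positivity)
          (setIntegral_mul_pow_le_pow_mul hs ht hts hf_nonneg hf hfw ha
            (fun x hx => hw_nonneg x (hts hx)) hw_le) (by positivity)
          (pow_mul_le_setIntegral_mul_pow hs hu hus hf_nonneg hf hfw hw_nonneg hb.le hw_ge)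
    _ = (∫ x in s, f x ∂μ) / (∫ x in u, f x ∂μ) * (a / b) ^ m := by
        rw [mul_div_mul_comm, div_pow, mul_comm]

end WeightedMass

theorem mul_one_sub_le_of_le_abs {x δ : ℝ} (hδ : 0 ≤ δ) (hx : δ ≤ |x - 1 / 2|) :
    x * (1 - x) ≤ 1 / 4 - δ ^ 2 := by
  nlinarith [sq_abs (x - 1 / 2), pow_le_pow_left₀ hδ hx 2]

theorem le_mul_one_sub_of_mem_Ioo {x δ : ℝ} (hx : x ∈ Ioo (1 / 2 - δ) (1 / 2 + δ)) :
    1 / 4 - δ ^ 2 ≤ x * (1 - x) := by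
  nlinarith [sq_le_sq' (by linarith [hx.1] : -δ ≤ x - 1 / 2) (by linarith [hx.2] : x - 1 / 2 ≤ δ)]

theorem integrableOn_mul_pow_mul_one_sub {f : ℝ → ℝ} (hf : IntegrableOn f (Ioo 0 1)) (m : ℕ) :
    IntegrableOn (fun x => f x * (x * (1 - x)) ^ m) (Ioo 0 1) :=
  hf.mul_continuousOn_of_subset (by fun_prop) measurableSet_Ioo isCompact_Icc Ioo_subset_Icc_self

theorem stmt_7_general (k : ℕ) (f : ℝ → ℝ)
    (hf_nonneg : ∀ x ∈ Ioo (0 : ℝ) 1, 0 ≤ f x)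
    (hf_int : IntegrableOn f (Ioo (0 : ℝ) 1))
    (hf_center : ∀ ε > (0 : ℝ), 0 < ∫ x in Ioo (1 / 2 - ε) (1 / 2 + ε), f x) :
    ∀ ε > (0 : ℝ), ∃ C : ℝ, ∃ q : ℝ, 0 < q ∧ q < 1 ∧
      ∀ n : ℕ, k ≤ n →
        (∫ x in {x : ℝ | x ∈ Ioo (0 : ℝ) 1 ∧ ε ≤ |x - 1 / 2|},
            f x * (x * (1 - x)) ^ (n - k)) /
          (∫ x in Ioo (0 : ℝ) 1, f x * (x * (1 - x)) ^ (n - k)) ≤ C * q ^ n := by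
  intro ε hε
  obtain ⟨δ, hδ, hδε, hδ4⟩ : ∃ δ : ℝ, 0 < δ ∧ δ ≤ ε ∧ δ ≤ 1 / 4 :=
    ⟨min ε (1 / 4), lt_min hε (by norm_num), min_le_left _ _, min_le_right _ _⟩
  have ha : 0 < 1 / 4 - δ ^ 2 := by nlinarith
  have hb : 0 < 1 / 4 - (δ / 2) ^ 2 := by nlinarith
  set q := (1 / 4 - δ ^ 2) / (1 / 4 - (δ / 2) ^ 2)
  have hq : 0 < q := div_pos ha hb
  have hS : MeasurableSet {x : ℝ | x ∈ Ioo (0 : ℝ) 1 ∧ ε ≤ |x - 1 / 2|} :=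
    measurableSet_Ioo.inter
      (measurableSet_le measurable_const (by fun_prop : Measurable fun x : ℝ => |x - 1 / 2|))
  set R := (∫ x in Ioo 0 1, f x) / (∫ x in Ioo (1 / 2 - δ / 2) (1 / 2 + δ / 2), f x)
  refine ⟨R * (q ^ k)⁻¹, q, hq, (div_lt_one hb).2 (by nlinarith), fun n hn => ?_⟩
  calc _ ≤ R * q ^ (n - k) :=
        setIntegral_mul_pow_div_le measurableSet_Ioo hS measurableSet_Ioo (fun x hx => hx.1)
          (Ioo_subset_Ioo (by linarith) (by linarith)) hf_nonneg hf_int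
          (integrableOn_mul_pow_mul_one_sub hf_int _)
          (fun x hx => mul_nonneg hx.1.le (sub_nonneg.2 hx.2.le)) ha.le hb
          (fun x hx => mul_one_sub_le_of_le_abs hδ.le (hδε.trans hx.2))
          (fun x hx => le_mul_one_sub_of_mem_Ioo hx) (hf_center _ (half_pos hδ))
    _ = R * (q ^ k)⁻¹ * q ^ n := by rw [pow_sub₀ _ hq.ne' hn]; ring

/-- Let `p_k⁽ⁿ⁾` (for `n ≥ k`) have density proportional to
`f_k(x) (x(1-x))^{n-k}` on `(0,1)`, where `f_k` is nonnegative and integrable with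
`∫₀¹ f_k > 0` and `∫_{1/2-ε}^{1/2+ε} f_k > 0` for every `ε > 0`. Then
`P(|p_k⁽ⁿ⁾ - 1/2| ≥ ε)` decays geometrically in `n` (so `p_k⁽ⁿ⁾ → 1/2` in probability):
for every `ε > 0` there are `C` and `q < 1` with
`∫_{|x-1/2| ≥ ε} f_k (x(1-x))^{n-k} / ∫₀¹ f_k (x(1-x))^{n-k} ≤ C qⁿ` for all `n ≥ k`. -/
theorem stmt_7 (k : ℕ) (f : ℝ → ℝ)
    (hf_nonneg : ∀ x ∈ Ioo (0 : ℝ) 1, 0 ≤ f x)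
    (hf_int : IntegrableOn f (Ioo (0 : ℝ) 1))
    (hf_pos : 0 < ∫ x in Ioo (0 : ℝ) 1, f x)
    (hf_center : ∀ ε > (0 : ℝ), 0 < ∫ x in Ioo (1 / 2 - ε) (1 / 2 + ε), f x) :
    ∀ ε > (0 : ℝ), ∃ C : ℝ, ∃ q : ℝ, 0 < q ∧ q < 1 ∧
      ∀ n : ℕ, k ≤ n →
        (∫ x in {x : ℝ | x ∈ Ioo (0 : ℝ) 1 ∧ ε ≤ |x - 1 / 2|},
            f x * (x * (1 - x)) ^ (n - k)) /
          (∫ x in Ioo (0 : ℝ) 1, f x * (x * (1 - x)) ^ (n - k)) ≤ C * q ^ n :=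
  stmt_7_general k f hf_nonneg hf_int hf_center
end

section
/- Define ψ_n^{−1}:(0,∞)^n→ℝ^n via the Skibinsky array: given (z_1,...,z_n), set g_{i,j}=0 for i>j, g_{0,j}=1, g_{i,j}=g_{i,j-1}+z_{j-i+1}g_{i-1,j} for 1≤i≤j, and let m_k=g_{k,k}. Then ψ_n^{−1}(1,1,...,1) = (c_1, c_2, ..., c_n), where c_k = binom(2k,k)/(k+1) is the k-th Catalan number (the k-th moment of the Marchenko–Pastur distribution dη(x) = (2πx)^{−1}√(x(4−x))·1_{(0,4)}(x)dx). -/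
/-- The inverse map `ψₙ⁻¹` is given by the Skibinsky array: from `(z₁,…,zₙ)` set
`g i j = 0` for `i > j`, `g 0 j = 1`, `g i j = g i (j-1) + z_{j-i+1} g (i-1) j` for `1 ≤ i ≤ j`,
and `m k = g k k`. At the point `(1,1,…,1)` (all recursion variables equal to one) the resulting
moments are the Catalan numbers: `ψₙ⁻¹(1,…,1) = (c₁,…,cₙ)` with
`c_k = binom (2k) k / (k+1)`, the `k`-th moment of the Marchenko–Pastur distribution. -/
theorem stmt_11 (n : ℕ) (z : ℕ → ℝ) (hz : ∀ j, 1 ≤ j → j ≤ n → z j = 1)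
    (g : ℕ → ℕ → ℝ)
    (h_zero : ∀ i j, j < i → g i j = 0)
    (h_top : ∀ j, g 0 j = 1)
    (h_rec : ∀ i j : ℕ, 1 ≤ i → i ≤ j → g i j = g i (j - 1) + z (j - i + 1) * g (i - 1) j) :
    ∀ k : ℕ, 1 ≤ k → k ≤ n → g k k = (Nat.choose (2 * k) k : ℝ) / (k + 1) := by
  have key : ∀ j, j ≤ n → ∀ i, i ≤ j →
      g i j = ((j : ℝ) - i + 1) * ((i + j).choose i : ℝ) / (j + 1) := by
    intro j
    induction j with
    | zero =>
      intro _ i hi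
      interval_cases i
      simp [h_top]
    | succ j ih =>
      intro hj i hi
      induction i with
      | zero =>
        rw [h_top]
        simp only [Nat.choose_zero_right, Nat.cast_one, Nat.cast_zero, Nat.cast_add]
        rw [eq_comm, div_eq_one_iff_eq (by positivity)]
        ring
      | succ i ihi =>
        have hrec := h_rec (i + 1) (j + 1) (by omega) hi
        have hzz : z (j + 1 - (i + 1) + 1) = 1 := hz _ (by omega) (by omega)
        rw [hzz, one_mul] at hrec
        simp only [Nat.add_sub_cancel] at hrec
        have hgi : g i (j + 1) = ((j : ℝ) + 1 - i + 1) * ((i + (j + 1)).choose i : ℝ) / (j + 2) := by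
          have := ihi (by omega)
          rw [this]; push_cast; try ring
        rcases Nat.lt_or_ge i j with hij | hij
        · -- i + 1 ≤ j
          have hgj := ih (by omega) (i + 1) (by omega)
          push_cast at hgj
          rw [hrec, hgj, hgi]
          have hp : (i + 1 + (j + 1)).choose (i + 1) = (i + j + 1).choose i + (i + j + 1).choose (i + 1) := by
            have : i + 1 + (j + 1) = (i + j + 1) + 1 := by ring
            rw [this, Nat.choose_succ_succ']
          have hkey : ((i + j + 1).choose (i + 1) : ℝ) * (i + 1) = ((i + j + 1).choose i : ℝ) * (j + 1) := by
            have := Nat.choose_succ_right_eq (i + j + 1) i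
            have h2 : i + j + 1 - i = j + 1 := by omega
            rw [h2] at this
            exact_mod_cast this
          have e1 : i + 1 + j = i + j + 1 := by ring
          have e2 : i + (j + 1) = i + j + 1 := by ring
          rw [hp, e1, e2]
          have hj1 : (j : ℝ) + 1 ≠ 0 := by positivity
          have hj2 : (j : ℝ) + 2 ≠ 0 := by positivity
          have hi1 : ((i : ℝ) + 1) ≠ 0 := by positivity
          have hA : ((i + j + 1).choose (i + 1) : ℝ) = ((i + j + 1).choose i : ℝ) * (j + 1) / (i + 1) := by
            rw [eq_div_iff hi1]; exact hkey
          push_cast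
          rw [hA]
          field_simp
          ring
        · -- i = j
          have hij' : i = j := by omega
          subst hij'
          have hgz : g (i + 1) i = 0 := h_zero _ _ (by omega)
          rw [hrec, hgz, hgi, zero_add]
          have e2 : i + (i + 1) = 2 * i + 1 := by ring
          have e3 : i + 1 + (i + 1) = 2 * (i + 1) := by ring
          rw [e2, e3]
          have hc : (2 * (i + 1)).choose (i + 1) = 2 * (2 * i + 1).choose i := by
            have h1 : 2 * (i + 1) = (2 * i + 1) + 1 := by ring
            rw [h1, Nat.choose_succ_succ']
            have h2 : (2 * i + 1).choose (i + 1) = (2 * i + 1).choose i := by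
              have := Nat.choose_symm (n := 2 * i + 1) (k := i + 1) (by omega)
              have h3 : 2 * i + 1 - (i + 1) = i := by omega
              rw [h3] at this
              exact this.symm
            omega
          rw [hc]
          push_cast
          ring
  intro k hk hkn
  have := key k hkn k le_rfl
  rw [this]
  have : k + k = 2 * k := by ring
  rw [this]
  ring_nf
end
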